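/- If $\Phi \in \ker(H_{AB}^\dagger - i)$ and $\Phi = \sum_k \Phi_k \otimes \rho_k$ is the decomposition along an orthonormal eigenbasis $\{\rho_k\}$ of $H_B$ with $H_B \rho_k = \lambda_k \rho_k$, then each component satisfies $H_A^\dagger \Phi_k = (i - \lambda_k)\Phi_k$, i.e., $\Phi_k \in \ker(H_A^\dagger - (i-\lambda_k))$. -/

import Mathlib

set_option synthInstance.maxHeartbeats 1000000

open ComplexInnerProductSpace

instance piLp_completeSpace {n : ℕ} {HA : Type*} [NormedAddCommGroup HA]
    [InnerProductSpace ℂ HA] [CompleteSpace HA] :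
    CompleteSpace (PiLp 2 fun _ : Fin n => HA) :=
  inferInstance

/-- Let `H_A` be densely defined symmetric on `𝓗_A`, `H_B` self-adjoint on finite-dimensional
`𝓗_B` with orthonormal eigenbasis `{ρ_k}` and real eigenvalues `λ_k`, and
`H_AB = H_A ⊗ 𝕀 + 𝕀 ⊗ H_B` (realized componentwise on `⊕ₖ 𝓗_A` via the eigenbasis).  If
`Φ ∈ ker(H_AB† - i)` with components `Φ_k`, then `H_A† Φ_k = (i - λ_k) Φ_k`, i.e.
`Φ_k ∈ ker(H_A† - (i - λ_k))`. -/
theorem stmt_3 {HA : Type*} [NormedAddCommGroup HA] [InnerProductSpace ℂ HA] [CompleteSpace HA]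
    (TA : HA →ₗ.[ℂ] HA) (hdense : Dense (TA.domain : Set HA))
    (hsymm : ∀ x y : TA.domain, ⟪TA x, (y : HA)⟫ = ⟪(x : HA), TA y⟫)
    (n : ℕ) (lam : Fin n → ℝ)
    (TAB : (PiLp 2 fun _ : Fin n => HA) →ₗ.[ℂ] (PiLp 2 fun _ : Fin n => HA))
    (hdom : ∀ Φ : PiLp 2 fun _ : Fin n => HA, Φ ∈ TAB.domain ↔ ∀ k, Φ k ∈ TA.domain)
    (hact : ∀ (Φ : TAB.domain) (k : Fin n),
      (TAB Φ : PiLp 2 fun _ : Fin n => HA) k =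
        TA ⟨(Φ : PiLp 2 fun _ : Fin n => HA) k, (hdom _).mp Φ.2 k⟩ +
          (lam k : ℂ) • (Φ : PiLp 2 fun _ : Fin n => HA) k) :
    ∀ (Φ : PiLp 2 fun _ : Fin n => HA) (h : Φ ∈ TAB.adjoint.domain),
      TAB.adjoint ⟨Φ, h⟩ = Complex.I • Φ →
      ∀ k : Fin n, ∃ hk : Φ k ∈ TA.adjoint.domain,
        TA.adjoint ⟨Φ k, hk⟩ = (Complex.I - (lam k : ℂ)) • Φ k := by
  -- density of TAB.domain
  have hTABdense : Dense (TAB.domain : Set (PiLp 2 fun _ : Fin n => HA)) := by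
    have hpi : Dense (Set.univ.pi fun _ : Fin n => (TA.domain : Set HA)) :=
      dense_pi Set.univ fun _ _ => hdense
    have heq : (TAB.domain : Set (PiLp 2 fun _ : Fin n => HA)) =
        (PiLp.continuousLinearEquiv 2 ℂ fun _ : Fin n => HA) ⁻¹'
          (Set.univ.pi fun _ : Fin n => (TA.domain : Set HA)) := by
      ext Φ
      simp [hdom, Set.mem_pi]
    rw [heq]
    exact hpi.preimage (PiLp.continuousLinearEquiv 2 ℂ fun _ : Fin n => HA).toHomeomorph.isOpenMap
  intro Φ h heq k
  have key : ∀ x : TA.domain,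
      ⟪((Complex.I - (lam k : ℂ)) • Φ k : HA), (x : HA)⟫ = ⟪Φ k, TA x⟫ := by
    intro x
    have hu0mem : (WithLp.toLp 2 (fun j => if j = k then (x : HA) else 0) : PiLp 2 fun _ : Fin n => HA)
        ∈ TAB.domain := by
      rw [hdom]
      intro j
      by_cases hj : j = k <;> simp only [hj, if_pos, if_neg, ite_true, ite_false]
      · exact x.2
      · exact Submodule.zero_mem _
    set u : TAB.domain := ⟨WithLp.toLp 2 (fun j => if j = k then (x : HA) else 0), hu0mem⟩ with hu
    have hucoe : ∀ j, (u : PiLp 2 fun _ : Fin n => HA) j = if j = k then (x : HA) else 0 :=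
      fun j => rfl
    have hform := (TAB.adjoint_isFormalAdjoint hTABdense) ⟨Φ, h⟩ u
    rw [heq] at hform
    have hL : ⟪(Complex.I • Φ : PiLp 2 fun _ : Fin n => HA), (u : PiLp 2 fun _ : Fin n => HA)⟫
        = ⟪(Complex.I • Φ k : HA), (x : HA)⟫ := by
      rw [PiLp.inner_apply]
      rw [Finset.sum_eq_single k]
      · simp [hucoe, inner_smul_left, mul_comm]
      · intro j _ hj
        simp [hucoe, hj]
      · simp
    have hR : ⟪Φ, (TAB u : PiLp 2 fun _ : Fin n => HA)⟫
        = ⟪Φ k, TA x⟫ + (lam k : ℂ) * ⟪Φ k, (x : HA)⟫ := by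
      rw [PiLp.inner_apply]
      rw [Finset.sum_eq_single k]
      · rw [hact u k]
        have hxeq : (⟨(u : PiLp 2 fun _ : Fin n => HA) k, (hdom _).mp u.2 k⟩ : TA.domain)
            = x := by
          ext
          simp [hucoe]
        rw [hxeq]
        have h1 : (u : PiLp 2 fun _ : Fin n => HA) k = (x : HA) := by simp [hucoe]
        rw [h1, inner_add_right, inner_smul_right]
      · intro j _ hj
        rw [hact u j]
        have h0 : (u : PiLp 2 fun _ : Fin n => HA) j = 0 := by simp [hucoe, hj]
        have hzeq : (⟨(u : PiLp 2 fun _ : Fin n => HA) j, (hdom _).mp u.2 j⟩ : TA.domain)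
            = 0 := by
          ext
          simpa using h0
        rw [hzeq, h0]
        simp
      · simp
    rw [hL, hR, inner_smul_left] at hform
    rw [inner_smul_left]
    simp only [map_sub, Complex.conj_ofReal, Complex.conj_I] at hform ⊢
    linear_combination hform
  have hk : Φ k ∈ TA.adjoint.domain :=
    TA.mem_adjoint_domain_of_exists _ ⟨_, key⟩
  exact ⟨hk, LinearPMap.adjoint_apply_eq hdense ⟨Φ k, hk⟩ key⟩
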